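/- arXiv:1005.3144 — 6 statements merged into one kernel-verified Lean document; each statement's English description precedes it below -/
import Mathlib

section
/- Let a, l, u ∈ ℝⁿ with l ≤ u componentwise, b ∈ ℝ, and y ∈ ℝⁿ, and suppose the equality knapsack set D_E = {x ∈ ℝⁿ : l ≤ x ≤ u, aᵀx = b} is nonempty. Then the problem min_{x ∈ D_E} ½‖x − y‖₂² has a unique solution x*, and there exists λ* ∈ ℝ such that h(λ*) = 0 and x* = mid(l, y − λ*·a, u), where h(λ) = b − Σᵢ aᵢ·mid(lᵢ, yᵢ − λ·aᵢ, uᵢ). -/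
/-!
The map `t ↦ ∑ aᵢ·mid(lᵢ, yᵢ - t·aᵢ, uᵢ)` is continuous, and for `t → +∞` (resp. `-∞`) each
summand drops below (resp. rises above) `aᵢ·x₀ᵢ` for any feasible `x₀`; the intermediate value
theorem yields a multiplier `λ*` for which `x* = mid(l, y - λ*·a, u)` is feasible. Coordinatewise,
`x*` is the projection of `y - λ*·a` onto `[lᵢ, uᵢ]`, so `(x* - y + λ*·a)·(z - x*) ≥ 0` for
every `z` in the box; summing, and using `aᵀz = aᵀx*`, gives the Pythagorean inequality
`‖x* - y‖² + ‖z - x*‖² ≤ ‖z - y‖²` on the knapsack set, hence minimality and uniqueness.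
-/

open Filter Finset

theorem max_min_sub_mul_sub_nonneg {ℓ υ z : ℝ} (v : ℝ) (hℓz : ℓ ≤ z) (hzυ : z ≤ υ) :
    0 ≤ (max ℓ (min v υ) - v) * (z - max ℓ (min v υ)) := by
  rcases le_total v ℓ with hvℓ | hℓv
  · rw [min_eq_left (hvℓ.trans (hℓz.trans hzυ)), max_eq_left hvℓ]
    exact mul_nonneg (sub_nonneg.2 hvℓ) (sub_nonneg.2 hℓz)
  rcases le_total v υ with hvυ | hυv
  · simp [min_eq_left hvυ, max_eq_right hℓv]
  · rw [min_eq_right hυv, max_eq_right (hℓz.trans hzυ)]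
    exact mul_nonneg_of_nonpos_of_nonpos (sub_nonpos.2 hυv) (sub_nonpos.2 hzυ)

theorem eventually_atTop_mul_max_min_le {ℓ υ x : ℝ} (a v : ℝ) (hℓx : ℓ ≤ x) (hxυ : x ≤ υ) :
    ∀ᶠ t in atTop, a * max ℓ (min (v - t * a) υ) ≤ a * x := by
  rcases lt_trichotomy a 0 with ha | rfl | ha
  · filter_upwards [eventually_ge_atTop ((v - υ) / a)] with t ht
    rw [div_le_iff_of_neg ha] at ht
    rw [min_eq_right (by linarith), max_eq_right (hℓx.trans hxυ)]
    exact mul_le_mul_of_nonpos_left hxυ ha.le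
  · simp
  · filter_upwards [eventually_ge_atTop ((v - ℓ) / a)] with t ht
    rw [div_le_iff₀ ha] at ht
    have hvℓ : v - t * a ≤ ℓ := by linarith
    rw [min_eq_left (hvℓ.trans (hℓx.trans hxυ)), max_eq_left hvℓ]
    exact mul_le_mul_of_nonneg_left hℓx ha.le

theorem eventually_atBot_mul_le_max_min {ℓ υ x : ℝ} (a v : ℝ) (hℓx : ℓ ≤ x) (hxυ : x ≤ υ) :
    ∀ᶠ t in atBot, a * x ≤ a * max ℓ (min (v - t * a) υ) := by
  filter_upwards [tendsto_neg_atBot_atTop.eventually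
    (eventually_atTop_mul_max_min_le (-a) v hℓx hxυ)] with t ht
  simpa using ht

variable {ι : Type*} [Fintype ι]

theorem exists_multiplier_sum_mul_max_min_eq (a l u y x : ι → ℝ)
    (hx : ∀ i, l i ≤ x i ∧ x i ≤ u i) :
    ∃ t : ℝ, ∑ i, a i * max (l i) (min (y i - t * a i) (u i)) = ∑ i, a i * x i := by
  set g : ℝ → ℝ := fun t => ∑ i, a i * max (l i) (min (y i - t * a i) (u i))
  have hg : Continuous g := by fun_prop
  obtain ⟨t₁, ht₁⟩ := (eventually_all.2 fun i =>
    eventually_atTop_mul_max_min_le (a i) (y i) (hx i).1 (hx i).2).exists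
  obtain ⟨t₂, ht₂⟩ := (eventually_all.2 fun i =>
    eventually_atBot_mul_le_max_min (a i) (y i) (hx i).1 (hx i).2).exists
  exact intermediate_value_univ t₁ t₂ hg
    ⟨sum_le_sum fun i _ => ht₁ i, sum_le_sum fun i _ => ht₂ i⟩

theorem sum_sq_add_sum_sq_le_of_eq_max_min {a l u y x z : ι → ℝ} {t : ℝ}
    (hx : x = fun i => max (l i) (min (y i - t * a i) (u i)))
    (hz : ∀ i, l i ≤ z i ∧ z i ≤ u i) (hax : ∑ i, a i * z i = ∑ i, a i * x i) :
    ∑ i, (x i - y i) ^ 2 + ∑ i, (z i - x i) ^ 2 ≤ ∑ i, (z i - y i) ^ 2 := by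
  have hvar : 0 ≤ ∑ i, (x i - (y i - t * a i)) * (z i - x i) :=
    sum_nonneg fun i _ => hx ▸ max_min_sub_mul_sub_nonneg _ (hz i).1 (hz i).2
  have hexpand : ∑ i, (z i - y i) ^ 2 = ∑ i, (x i - y i) ^ 2 + ∑ i, (z i - x i) ^ 2
      + 2 * ∑ i, (x i - (y i - t * a i)) * (z i - x i)
      - 2 * t * (∑ i, a i * z i - ∑ i, a i * x i) := by
    simp only [mul_sum, ← sum_add_distrib, ← sum_sub_distrib]
    exact sum_congr rfl fun i _ => by ring
  rw [hax, sub_self, mul_zero, sub_zero] at hexpand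
  linarith

theorem eq_of_sum_sq_sub_nonpos {x y : ι → ℝ} (h : ∑ i, (x i - y i) ^ 2 ≤ 0) : x = y := by
  have hsum := le_antisymm h (sum_nonneg fun i _ => sq_nonneg (x i - y i))
  rw [Fintype.sum_eq_zero_iff_of_nonneg fun i => sq_nonneg (x i - y i)] at hsum
  funext i
  exact sub_eq_zero.1 (pow_eq_zero_iff two_ne_zero |>.1 (congrFun hsum i))

/-- Projection onto the equality knapsack set: if
`D_E = {x : l ≤ x ≤ u componentwise, aᵀx = b}` is nonempty, then
`min_{x ∈ D_E} ½‖x − y‖₂²` has a unique solution `x*`, and there exists `λ*`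
with `h(λ*) = 0` and `x* = mid(l, y − λ*·a, u)`, where
`h(λ) = b − Σᵢ aᵢ·mid(lᵢ, yᵢ − λ·aᵢ, uᵢ)` and `mid(ℓ, v, υ) = max ℓ (min v υ)`. -/
theorem knapsack_equality_projection (n : ℕ) (a l u y : Fin n → ℝ) (b : ℝ)
    (hlu : ∀ i, l i ≤ u i)
    (hne : ∃ x : Fin n → ℝ, (∀ i, l i ≤ x i ∧ x i ≤ u i) ∧ ∑ i, a i * x i = b) :
    ∃ xstar : Fin n → ℝ,
      ((∀ i, l i ≤ xstar i ∧ xstar i ≤ u i) ∧ ∑ i, a i * xstar i = b) ∧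
      (∀ z : Fin n → ℝ, ((∀ i, l i ≤ z i ∧ z i ≤ u i) ∧ ∑ i, a i * z i = b) →
        (1 / 2) * ∑ i, (xstar i - y i) ^ 2 ≤ (1 / 2) * ∑ i, (z i - y i) ^ 2) ∧
      (∀ x' : Fin n → ℝ,
        (((∀ i, l i ≤ x' i ∧ x' i ≤ u i) ∧ ∑ i, a i * x' i = b) ∧
          ∀ z : Fin n → ℝ, ((∀ i, l i ≤ z i ∧ z i ≤ u i) ∧ ∑ i, a i * z i = b) →
            (1 / 2) * ∑ i, (x' i - y i) ^ 2 ≤ (1 / 2) * ∑ i, (z i - y i) ^ 2) →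
        x' = xstar) ∧
      ∃ lam : ℝ,
        b - ∑ i, a i * max (l i) (min (y i - lam * a i) (u i)) = 0 ∧
        xstar = fun i => max (l i) (min (y i - lam * a i) (u i)) := by
  obtain ⟨x₀, hx₀, hb⟩ := hne
  obtain ⟨lam, hlam⟩ := exists_multiplier_sum_mul_max_min_eq a l u y x₀ hx₀
  set xstar : Fin n → ℝ := fun i => max (l i) (min (y i - lam * a i) (u i)) with hxstar
  have hfeas : (∀ i, l i ≤ xstar i ∧ xstar i ≤ u i) ∧ ∑ i, a i * xstar i = b :=
    ⟨fun i => ⟨le_max_left _ _, max_le (hlu i) (min_le_right _ _)⟩, hlam.trans hb⟩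
  have hpyth (z : Fin n → ℝ) (hz : (∀ i, l i ≤ z i ∧ z i ≤ u i) ∧ ∑ i, a i * z i = b) :
      ∑ i, (xstar i - y i) ^ 2 + ∑ i, (z i - xstar i) ^ 2 ≤ ∑ i, (z i - y i) ^ 2 :=
    sum_sq_add_sum_sq_le_of_eq_max_min hxstar hz.1 (hz.2.trans hfeas.2.symm)
  refine ⟨xstar, hfeas, fun z hz => ?_, fun x' ⟨hx', hmin⟩ => ?_, lam,
    sub_eq_zero.2 hfeas.2.symm, rfl⟩
  · have := hpyth z hz
    have := sum_nonneg fun i (_ : i ∈ univ) => sq_nonneg (z i - xstar i)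
    linarith
  · have := hpyth x' hx'
    have := hmin xstar hfeas
    exact eq_of_sum_sq_sub_nonpos (by linarith)
end

section
/- Let a, l, u, y ∈ ℝⁿ with l ≤ u componentwise and b ∈ ℝ. The function h : ℝ → ℝ defined by h(λ) = b − Σᵢ aᵢ·mid(lᵢ, yᵢ − λ·aᵢ, uᵢ) is continuous and monotone (nondecreasing) on ℝ. -/
/-! Each summand `aᵢ · mid(lᵢ, yᵢ − λ aᵢ, uᵢ)` is antitone in `λ`: the clamp `mid(lᵢ, ·, uᵢ)` is
monotone and its argument moves against the sign of `aᵢ`, so multiplying by `aᵢ` always yields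
an antitone function. -/

theorem antitone_mul_max_min_sub_mul {α : Type*} [Ring α] [LinearOrder α] [IsOrderedRing α]
    (a l u y : α) : Antitone fun t : α => a * max l (min (y - t * a) u) := by
  have hclamp : Monotone fun v : α => max l (min v u) :=
    fun _ _ h => max_le_max le_rfl (min_le_min h le_rfl)
  rcases le_total 0 a with ha | ha
  · exact (hclamp.comp_antitone fun _ _ h =>
      sub_le_sub_left (mul_le_mul_of_nonneg_right h ha) y).const_mul ha
  · exact (hclamp.comp fun _ _ h =>
      sub_le_sub_left (mul_le_mul_of_nonpos_right h ha) y).const_mul_of_nonpos ha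

theorem knapsack_h_continuous_monotone_general (n : ℕ) (a l u y : Fin n → ℝ) (b : ℝ) :
    Continuous (fun lam : ℝ =>
      b - ∑ i, a i * max (l i) (min (y i - lam * a i) (u i))) ∧
    Monotone (fun lam : ℝ =>
      b - ∑ i, a i * max (l i) (min (y i - lam * a i) (u i))) :=
  ⟨by fun_prop, fun _ _ hst => sub_le_sub_left (Finset.sum_le_sum fun i _ =>
    antitone_mul_max_min_sub_mul (a i) (l i) (u i) (y i) hst) b⟩

/-- The function `h(λ) = b − Σᵢ aᵢ·mid(lᵢ, yᵢ − λ·aᵢ, uᵢ)` (with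
`mid(ℓ, v, υ) = max ℓ (min v υ)`) is continuous and monotone nondecreasing. -/
theorem knapsack_h_continuous_monotone (n : ℕ) (a l u y : Fin n → ℝ) (b : ℝ)
    (hlu : ∀ i, l i ≤ u i) :
    Continuous (fun lam : ℝ =>
      b - ∑ i, a i * max (l i) (min (y i - lam * a i) (u i))) ∧
    Monotone (fun lam : ℝ =>
      b - ∑ i, a i * max (l i) (min (y i - lam * a i) (u i))) :=
  knapsack_h_continuous_monotone_general n a l u y b
end

section
/- Let a, l, u, y ∈ ℝⁿ with l ≤ u componentwise, b ∈ ℝ, suppose aᵢ ≠ 0 for at least one index i, and suppose D_E = {x ∈ ℝⁿ : l ≤ x ≤ u, aᵀx = b} is nonempty. Define the breakpoints λᵢˡ = (yᵢ − lᵢ)/aᵢ and λᵢᵘ = (yᵢ − uᵢ)/aᵢ for indices i with aᵢ ≠ 0, and set λ_L = min and λ_R = max over all these breakpoints. Then h(λ) ≤ 0 for all λ ≤ λ_L, h(λ) ≥ 0 for all λ ≥ λ_R (in particular h(λ_L)·h(λ_R) ≤ 0), and there exists λ* ∈ [λ_L, λ_R] with h(λ*) = 0. -/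
/-!
Left of every breakpoint each clamped coordinate `mid(lᵢ, yᵢ − λaᵢ, uᵢ)` sits at the bound
maximising `aᵢxᵢ` over `[lᵢ, uᵢ]` (`uᵢ` if `aᵢ > 0`, `lᵢ` if `aᵢ < 0`), so the clamped point
dominates any feasible `x` in the sum `Σ aᵢxᵢ = b` and `h ≤ 0`; right of every breakpoint it sits
at the minimising bound and `h ≥ 0`. As `h` is continuous, the intermediate value theorem gives a
root between `λ_L` and `λ_R`.
-/

section KnapsackResidual

variable {ι : Type*} [Fintype ι]

def knapsackResidual (a l u y : ι → ℝ) (b lam : ℝ) : ℝ :=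
  b - ∑ i, a i * max (l i) (min (y i - lam * a i) (u i))

theorem continuous_knapsackResidual (a l u y : ι → ℝ) (b : ℝ) :
    Continuous (knapsackResidual a l u y b) := by
  unfold knapsackResidual
  fun_prop

theorem mul_le_mul_clamp_of_le_breakpoints {a l u y x lam : ℝ} (hlu : l ≤ u) (hlx : l ≤ x)
    (hxu : x ≤ u) (hl : a ≠ 0 → lam ≤ (y - l) / a) (hu : a ≠ 0 → lam ≤ (y - u) / a) :
    a * x ≤ a * max l (min (y - lam * a) u) := by
  rcases lt_trichotomy a 0 with ha | rfl | ha
  · have hclamp : max l (min (y - lam * a) u) = l := by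
      have := (le_div_iff_of_neg ha).1 (hl ha.ne)
      exact max_eq_left (min_le_of_left_le (by linarith))
    rw [hclamp]
    exact mul_le_mul_of_nonpos_left hlx ha.le
  · simp
  · have hclamp : max l (min (y - lam * a) u) = u := by
      have := (le_div_iff₀ ha).1 (hu ha.ne')
      rw [min_eq_right (by linarith), max_eq_right hlu]
    rw [hclamp]
    exact mul_le_mul_of_nonneg_left hxu ha.le

theorem mul_clamp_le_mul_of_breakpoints_le {a l u y x lam : ℝ} (hlu : l ≤ u) (hlx : l ≤ x)
    (hxu : x ≤ u) (hl : a ≠ 0 → (y - l) / a ≤ lam) (hu : a ≠ 0 → (y - u) / a ≤ lam) :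
    a * max l (min (y - lam * a) u) ≤ a * x := by
  -- `(a, λ) ↦ (-a, -λ)` leaves `y - λ * a` unchanged and swaps the breakpoint conditions.
  have key := mul_le_mul_clamp_of_le_breakpoints (a := -a) (y := y) (lam := -lam) hlu hlx hxu
    (fun ha => by rw [div_neg, neg_le_neg_iff]; exact hl (neg_ne_zero.1 ha))
    (fun ha => by rw [div_neg, neg_le_neg_iff]; exact hu (neg_ne_zero.1 ha))
  rwa [neg_mul_neg, neg_mul, neg_mul, neg_le_neg_iff] at key

variable {a l u y x : ι → ℝ} {b lam : ℝ}

theorem knapsackResidual_nonpos_of_le_breakpoints (hlu : ∀ i, l i ≤ u i)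
    (hx : ∀ i, l i ≤ x i ∧ x i ≤ u i) (hxb : ∑ i, a i * x i = b)
    (hl : ∀ i, a i ≠ 0 → lam ≤ (y i - l i) / a i) (hu : ∀ i, a i ≠ 0 → lam ≤ (y i - u i) / a i) :
    knapsackResidual a l u y b lam ≤ 0 := by
  rw [knapsackResidual, sub_nonpos, ← hxb]
  exact Finset.sum_le_sum fun i _ =>
    mul_le_mul_clamp_of_le_breakpoints (hlu i) (hx i).1 (hx i).2 (hl i) (hu i)

theorem knapsackResidual_nonneg_of_breakpoints_le (hlu : ∀ i, l i ≤ u i)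
    (hx : ∀ i, l i ≤ x i ∧ x i ≤ u i) (hxb : ∑ i, a i * x i = b)
    (hl : ∀ i, a i ≠ 0 → (y i - l i) / a i ≤ lam) (hu : ∀ i, a i ≠ 0 → (y i - u i) / a i ≤ lam) :
    0 ≤ knapsackResidual a l u y b lam := by
  rw [knapsackResidual, sub_nonneg, ← hxb]
  exact Finset.sum_le_sum fun i _ =>
    mul_clamp_le_mul_of_breakpoints_le (hlu i) (hx i).1 (hx i).2 (hl i) (hu i)

end KnapsackResidual

theorem knapsack_root_bracket_general (n : ℕ) (a l u y : Fin n → ℝ) (b : ℝ)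
    (hlu : ∀ i, l i ≤ u i)
    (hne : ∃ x : Fin n → ℝ, (∀ i, l i ≤ x i ∧ x i ≤ u i) ∧ ∑ i, a i * x i = b)
    (lamL lamR : ℝ)
    (hL : IsLeast
      {t : ℝ | ∃ i, a i ≠ 0 ∧ (t = (y i - l i) / a i ∨ t = (y i - u i) / a i)} lamL)
    (hR : IsGreatest
      {t : ℝ | ∃ i, a i ≠ 0 ∧ (t = (y i - l i) / a i ∨ t = (y i - u i) / a i)} lamR) :
    (∀ lam : ℝ, lam ≤ lamL →
      b - ∑ i, a i * max (l i) (min (y i - lam * a i) (u i)) ≤ 0) ∧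
    (∀ lam : ℝ, lamR ≤ lam →
      0 ≤ b - ∑ i, a i * max (l i) (min (y i - lam * a i) (u i))) ∧
    (b - ∑ i, a i * max (l i) (min (y i - lamL * a i) (u i))) *
      (b - ∑ i, a i * max (l i) (min (y i - lamR * a i) (u i))) ≤ 0 ∧
    ∃ lam ∈ Set.Icc lamL lamR,
      b - ∑ i, a i * max (l i) (min (y i - lam * a i) (u i)) = 0 := by
  obtain ⟨x, hx, hxb⟩ := hne
  have hleft (lam : ℝ) (hlam : lam ≤ lamL) : knapsackResidual a l u y b lam ≤ 0 :=
    knapsackResidual_nonpos_of_le_breakpoints hlu hx hxb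
      (fun i hi => hlam.trans (hL.2 ⟨i, hi, .inl rfl⟩))
      (fun i hi => hlam.trans (hL.2 ⟨i, hi, .inr rfl⟩))
  have hright (lam : ℝ) (hlam : lamR ≤ lam) : 0 ≤ knapsackResidual a l u y b lam :=
    knapsackResidual_nonneg_of_breakpoints_le hlu hx hxb
      (fun i hi => (hR.2 ⟨i, hi, .inl rfl⟩).trans hlam)
      (fun i hi => (hR.2 ⟨i, hi, .inr rfl⟩).trans hlam)
  have hfL := hleft lamL le_rfl
  have hfR := hright lamR le_rfl
  refine ⟨hleft, hright, mul_nonpos_of_nonpos_of_nonneg hfL hfR, ?_⟩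
  exact intermediate_value_Icc (hL.2 hR.1)
    (continuous_knapsackResidual a l u y b).continuousOn ⟨hfL, hfR⟩

/-- Bracketing of the root of `h(λ) = b − Σᵢ aᵢ·mid(lᵢ, yᵢ − λ·aᵢ, uᵢ)`:
with `λ_L` the least and `λ_R` the greatest of the breakpoints
`(yᵢ − lᵢ)/aᵢ`, `(yᵢ − uᵢ)/aᵢ` (over indices with `aᵢ ≠ 0`), if the equality
knapsack set is nonempty then `h ≤ 0` on `(-∞, λ_L]`, `h ≥ 0` on `[λ_R, ∞)`,
`h(λ_L)·h(λ_R) ≤ 0`, and `h` has a root in `[λ_L, λ_R]`. -/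
theorem knapsack_root_bracket (n : ℕ) (a l u y : Fin n → ℝ) (b : ℝ)
    (hlu : ∀ i, l i ≤ u i)
    (hA : ∃ i, a i ≠ 0)
    (hne : ∃ x : Fin n → ℝ, (∀ i, l i ≤ x i ∧ x i ≤ u i) ∧ ∑ i, a i * x i = b)
    (lamL lamR : ℝ)
    (hL : IsLeast
      {t : ℝ | ∃ i, a i ≠ 0 ∧ (t = (y i - l i) / a i ∨ t = (y i - u i) / a i)} lamL)
    (hR : IsGreatest
      {t : ℝ | ∃ i, a i ≠ 0 ∧ (t = (y i - l i) / a i ∨ t = (y i - u i) / a i)} lamR) :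
    (∀ lam : ℝ, lam ≤ lamL →
      b - ∑ i, a i * max (l i) (min (y i - lam * a i) (u i)) ≤ 0) ∧
    (∀ lam : ℝ, lamR ≤ lam →
      0 ≤ b - ∑ i, a i * max (l i) (min (y i - lam * a i) (u i))) ∧
    (b - ∑ i, a i * max (l i) (min (y i - lamL * a i) (u i))) *
      (b - ∑ i, a i * max (l i) (min (y i - lamR * a i) (u i))) ≤ 0 ∧
    ∃ lam ∈ Set.Icc lamL lamR,
      b - ∑ i, a i * max (l i) (min (y i - lam * a i) (u i)) = 0 :=
  knapsack_root_bracket_general n a l u y b hlu hne lamL lamR hL hR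
end

section
/- Let a, l, u, y ∈ ℝⁿ with l ≤ u componentwise and aᵢ > 0 for every i, let b_l ≤ b_u in ℝ, and suppose the inequality knapsack set D_I = {x ∈ ℝⁿ : l ≤ x ≤ u, b_l ≤ aᵀx ≤ b_u} is nonempty. Let x_L* be the unique minimizer of ½‖x − y‖₂² over {x : l ≤ x ≤ u, aᵀx = b_l} and x_U* the unique minimizer of ½‖x − y‖₂² over {x : l ≤ x ≤ u, aᵀx = b_u}. Then the problem min_{x ∈ D_I} ½‖x − y‖₂² has a unique solution x*, and x* = mid(x_L*, y, x_U*). -/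
/-!
The constraint `b_l ≤ aᵀx ≤ b_u` couples the coordinates only through one scalar, so every
projection in sight is a box clamp `mid(l, y + t a, u)` for a suitable multiplier `t`:
for the equality-constrained problems this comes from the intermediate value theorem applied
to `t ↦ aᵀ mid(l, y + t a, u)`, together with the variational inequality
`⟨x - y, z - x⟩ ≥ 0`, which characterises the projection. Since `mid` commutes with the
monotone clamp, `mid(x_L*, y, x_U*)` is the clamp at `t* = mid(t_L, 0, t_U)`, and `t*` satisfies
complementary slackness for the interval `[b_l, b_u]`, which gives the variational inequality
on `D_I`.
-/

open Finset

section Projection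

variable {ι : Type*} [Fintype ι]

lemma sum_sq_add_sum_sq_le_of_inner_nonneg {x y z : ι → ℝ}
    (h : 0 ≤ ∑ i, (x i - y i) * (z i - x i)) :
    ∑ i, (x i - y i) ^ 2 + ∑ i, (z i - x i) ^ 2 ≤ ∑ i, (z i - y i) ^ 2 := by
  have hexpand : ∑ i, (z i - y i) ^ 2 = ∑ i, (x i - y i) ^ 2
      + 2 * ∑ i, (x i - y i) * (z i - x i) + ∑ i, (z i - x i) ^ 2 := by
    rw [mul_sum, ← sum_add_distrib, ← sum_add_distrib]
    exact sum_congr rfl fun i _ => by ring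
  linarith

lemma eq_of_inner_nonneg_of_sum_sq_le {x y z : ι → ℝ}
    (h : 0 ≤ ∑ i, (x i - y i) * (z i - x i))
    (hz : ∑ i, (z i - y i) ^ 2 ≤ ∑ i, (x i - y i) ^ 2) : z = x := by
  have hle := sum_sq_add_sum_sq_le_of_inner_nonneg h
  have hzero : ∑ i, (z i - x i) ^ 2 = 0 :=
    le_antisymm (by linarith) (by positivity)
  funext i
  have := congrFun ((Fintype.sum_eq_zero_iff_of_nonneg fun i => sq_nonneg _).1 hzero) i
  exact sub_eq_zero.1 (pow_eq_zero_iff two_ne_zero |>.1 this)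

end Projection

section Clamp

variable {α : Type*} [LinearOrder α]

lemma max_min_clamp_eq_clamp_max_min (l u y p q : α) :
    max (max l (min p u)) (min y (max l (min q u))) = max l (min (max p (min y q)) u) := by
  grind

lemma clamp_sub_mul_sub_clamp_nonneg [Ring α] [IsOrderedRing α] {l u z : α} (w : α)
    (hlz : l ≤ z) (hzu : z ≤ u) :
    0 ≤ (max l (min w u) - w) * (z - max l (min w u)) := by
  rcases le_total w l with hwl | hlw
  · rw [max_eq_left ((min_le_left _ _).trans hwl)]
    exact mul_nonneg (sub_nonneg.2 hwl) (sub_nonneg.2 hlz)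
  rcases le_total w u with hwu | huw
  · rw [min_eq_left hwu, max_eq_right hlw, sub_self, zero_mul]
  · rw [min_eq_right huw, max_eq_right (hlz.trans hzu)]
    exact mul_nonneg_of_nonpos_of_nonpos (sub_nonpos.2 huw) (sub_nonpos.2 hzu)

end Clamp

/-- Complementary slackness of `mid(t_L, 0, t_U)` for the constraint `s ∈ [b_l, b_u]`. -/
lemma mem_Icc_and_mul_sub_nonneg_of_monotone {s : ℝ → ℝ} (hs : Monotone s)
    {tL tU bl bu : ℝ} (hL : s tL = bl) (hU : s tU = bu) (hb : bl ≤ bu) :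
    (bl ≤ s (max tL (min 0 tU)) ∧ s (max tL (min 0 tU)) ≤ bu) ∧
      ∀ r, bl ≤ r ∧ r ≤ bu → 0 ≤ max tL (min 0 tU) * (r - s (max tL (min 0 tU))) := by
  set t := max tL (min 0 tU)
  have heq_tL (h : min 0 tU < t) : t = tL :=
    (max_choice tL (min 0 tU)).resolve_right h.ne'
  have hlow : bl ≤ s t := hL ▸ hs (le_max_left _ _)
  have hup : s t ≤ bu := by
    rcases le_or_gt t tU with h | h
    · exact hU ▸ hs h
    · rw [heq_tL ((min_le_right 0 tU).trans_lt h), hL]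
      exact hb
  refine ⟨⟨hlow, hup⟩, fun r ⟨hlr, hru⟩ => ?_⟩
  rcases lt_trichotomy t 0 with h | h | h
  · have htU : tU ≤ t := (min_le_iff.1 (le_max_right tL (min 0 tU))).resolve_left h.not_ge
    exact mul_nonneg_of_nonpos_of_nonpos h.le (by linarith [hU ▸ hs htU])
  · rw [h, zero_mul]
  · have htL := heq_tL ((min_le_left 0 tU).trans_lt h)
    rw [htL, hL]
    exact mul_nonneg (htL ▸ h).le (sub_nonneg.2 hlr)

def knapsackClamp {ι : Type*} (l u y a : ι → ℝ) (t : ℝ) : ι → ℝ :=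
  fun i => max (l i) (min (y i + t * a i) (u i))

section KnapsackClamp

variable {ι : Type*} {l u y a : ι → ℝ}

lemma knapsackClamp_mem_box (hlu : ∀ i, l i ≤ u i) (t : ℝ) (i : ι) :
    l i ≤ knapsackClamp l u y a t i ∧ knapsackClamp l u y a t i ≤ u i :=
  ⟨le_max_left _ _, max_le (hlu i) (min_le_right _ _)⟩

lemma mid_knapsackClamp (ha : ∀ i, 0 ≤ a i) (tL tU : ℝ) :
    (fun i => max (knapsackClamp l u y a tL i) (min (y i) (knapsackClamp l u y a tU i))) =
      knapsackClamp l u y a (max tL (min 0 tU)) := by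
  funext i
  simp only [knapsackClamp]
  rw [max_mul_of_nonneg _ _ (ha i), min_mul_of_nonneg _ _ (ha i), zero_mul,
    ← max_add_add_left, ← min_add_add_left, add_zero]
  exact max_min_clamp_eq_clamp_max_min _ _ _ _ _

lemma knapsackClamp_eq_left_of_le {t : ℝ} (h : ∀ i, y i + t * a i ≤ l i) :
    knapsackClamp l u y a t = l :=
  funext fun i => max_eq_left ((min_le_left _ _).trans (h i))

lemma knapsackClamp_eq_right_of_le (hlu : ∀ i, l i ≤ u i) {t : ℝ} (h : ∀ i, u i ≤ y i + t * a i) :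
    knapsackClamp l u y a t = u :=
  funext fun i => by simp only [knapsackClamp, min_eq_right (h i), max_eq_right (hlu i)]

variable [Fintype ι]

lemma monotone_sum_mul_knapsackClamp (ha : ∀ i, 0 ≤ a i) :
    Monotone fun t => ∑ i, a i * knapsackClamp l u y a t i := by
  intro s t hst
  refine sum_le_sum fun i _ => mul_le_mul_of_nonneg_left ?_ (ha i)
  exact max_le_max le_rfl (min_le_min (by nlinarith [ha i]) le_rfl)

lemma mul_sum_sub_le_sum_knapsackClamp {t : ℝ} {z : ι → ℝ} (hz : ∀ i, l i ≤ z i ∧ z i ≤ u i) :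
    t * (∑ i, a i * z i - ∑ i, a i * knapsackClamp l u y a t i) ≤
      ∑ i, (knapsackClamp l u y a t i - y i) * (z i - knapsackClamp l u y a t i) := by
  have hsplit : ∑ i, (knapsackClamp l u y a t i - y i) * (z i - knapsackClamp l u y a t i) =
      ∑ i, (knapsackClamp l u y a t i - (y i + t * a i)) * (z i - knapsackClamp l u y a t i) +
        t * (∑ i, a i * z i - ∑ i, a i * knapsackClamp l u y a t i) := by
    rw [← sum_sub_distrib, mul_sum, ← sum_add_distrib]
    exact sum_congr rfl fun i _ => by ring
  have hclamp : 0 ≤ ∑ i, (knapsackClamp l u y a t i - (y i + t * a i)) *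
      (z i - knapsackClamp l u y a t i) :=
    sum_nonneg fun i _ => clamp_sub_mul_sub_clamp_nonneg _ (hz i).1 (hz i).2
  linarith

lemma exists_sum_mul_knapsackClamp_eq (ha : ∀ i, 0 < a i) (hlu : ∀ i, l i ≤ u i) {b : ℝ}
    (hlb : ∑ i, a i * l i ≤ b) (hbu : b ≤ ∑ i, a i * u i) :
    ∃ t, ∑ i, a i * knapsackClamp l u y a t i = b := by
  obtain ⟨t₀, ht₀⟩ := (Set.finite_range fun i => (l i - y i) / a i).bddBelow
  obtain ⟨t₁, ht₁⟩ := (Set.finite_range fun i => (u i - y i) / a i).bddAbove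
  have hl : knapsackClamp l u y a t₀ = l := knapsackClamp_eq_left_of_le fun i => by
    have := ht₀ ⟨i, rfl⟩
    rw [le_div_iff₀ (ha i)] at this
    linarith
  have hu : knapsackClamp l u y a t₁ = u := knapsackClamp_eq_right_of_le hlu fun i => by
    have := ht₁ ⟨i, rfl⟩
    rw [div_le_iff₀ (ha i)] at this
    linarith
  have hcont : Continuous fun t => ∑ i, a i * knapsackClamp l u y a t i := by
    unfold knapsackClamp
    fun_prop
  exact intermediate_value_univ t₀ t₁ hcont ⟨by simpa [hl] using hlb, by simpa [hu] using hbu⟩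

lemma exists_eq_knapsackClamp (ha : ∀ i, 0 < a i) {x : ι → ℝ} {b : ℝ}
    (hx : (∀ i, l i ≤ x i ∧ x i ≤ u i) ∧ ∑ i, a i * x i = b)
    (hmin : ∀ z : ι → ℝ, ((∀ i, l i ≤ z i ∧ z i ≤ u i) ∧ ∑ i, a i * z i = b) →
      ∑ i, (x i - y i) ^ 2 ≤ ∑ i, (z i - y i) ^ 2) :
    ∃ t, x = knapsackClamp l u y a t := by
  have hlu i : l i ≤ u i := (hx.1 i).1.trans (hx.1 i).2
  obtain ⟨t, ht⟩ := exists_sum_mul_knapsackClamp_eq (y := y) ha hlu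
    (hx.2 ▸ sum_le_sum fun i _ => mul_le_mul_of_nonneg_left (hx.1 i).1 (ha i).le)
    (hx.2 ▸ sum_le_sum fun i _ => mul_le_mul_of_nonneg_left (hx.1 i).2 (ha i).le)
  have hvi := mul_sum_sub_le_sum_knapsackClamp (y := y) (a := a) (t := t) hx.1
  rw [hx.2, ht, sub_self, mul_zero] at hvi
  exact ⟨t, eq_of_inner_nonneg_of_sum_sq_le hvi (hmin _ ⟨knapsackClamp_mem_box hlu t, ht⟩)⟩

end KnapsackClamp

theorem knapsack_inequality_projection_general (n : ℕ) (a l u y xL xU : Fin n → ℝ)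
    (bl bu : ℝ)
    (hlu : ∀ i, l i ≤ u i) (ha : ∀ i, 0 < a i) (hb : bl ≤ bu)
    (hxLfeas : (∀ i, l i ≤ xL i ∧ xL i ≤ u i) ∧ ∑ i, a i * xL i = bl)
    (hxLmin : ∀ z : Fin n → ℝ,
      ((∀ i, l i ≤ z i ∧ z i ≤ u i) ∧ ∑ i, a i * z i = bl) →
      (1 / 2) * ∑ i, (xL i - y i) ^ 2 ≤ (1 / 2) * ∑ i, (z i - y i) ^ 2)
    (hxUfeas : (∀ i, l i ≤ xU i ∧ xU i ≤ u i) ∧ ∑ i, a i * xU i = bu)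
    (hxUmin : ∀ z : Fin n → ℝ,
      ((∀ i, l i ≤ z i ∧ z i ≤ u i) ∧ ∑ i, a i * z i = bu) →
      (1 / 2) * ∑ i, (xU i - y i) ^ 2 ≤ (1 / 2) * ∑ i, (z i - y i) ^ 2) :
    ∃ xstar : Fin n → ℝ,
      ((∀ i, l i ≤ xstar i ∧ xstar i ≤ u i) ∧
        bl ≤ ∑ i, a i * xstar i ∧ ∑ i, a i * xstar i ≤ bu) ∧
      (∀ z : Fin n → ℝ,
        ((∀ i, l i ≤ z i ∧ z i ≤ u i) ∧ bl ≤ ∑ i, a i * z i ∧ ∑ i, a i * z i ≤ bu) →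
        (1 / 2) * ∑ i, (xstar i - y i) ^ 2 ≤ (1 / 2) * ∑ i, (z i - y i) ^ 2) ∧
      (∀ x' : Fin n → ℝ,
        (((∀ i, l i ≤ x' i ∧ x' i ≤ u i) ∧
            bl ≤ ∑ i, a i * x' i ∧ ∑ i, a i * x' i ≤ bu) ∧
          ∀ z : Fin n → ℝ,
            ((∀ i, l i ≤ z i ∧ z i ≤ u i) ∧
              bl ≤ ∑ i, a i * z i ∧ ∑ i, a i * z i ≤ bu) →
            (1 / 2) * ∑ i, (x' i - y i) ^ 2 ≤ (1 / 2) * ∑ i, (z i - y i) ^ 2) →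
        x' = xstar) ∧
      xstar = fun i => max (xL i) (min (y i) (xU i)) := by
  have hLmin := fun z hz => le_of_mul_le_mul_left (hxLmin z hz) one_half_pos
  have hUmin := fun z hz => le_of_mul_le_mul_left (hxUmin z hz) one_half_pos
  obtain ⟨tL, rfl⟩ := exists_eq_knapsackClamp ha hxLfeas hLmin
  obtain ⟨tU, rfl⟩ := exists_eq_knapsackClamp ha hxUfeas hUmin
  set t := max tL (min 0 tU)
  obtain ⟨hsum, hslack⟩ := mem_Icc_and_mul_sub_nonneg_of_monotone
    (monotone_sum_mul_knapsackClamp fun i => (ha i).le) hxLfeas.2 hxUfeas.2 hb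
  have hvi : ∀ z : Fin n → ℝ,
      ((∀ i, l i ≤ z i ∧ z i ≤ u i) ∧ bl ≤ ∑ i, a i * z i ∧ ∑ i, a i * z i ≤ bu) →
      0 ≤ ∑ i, (knapsackClamp l u y a t i - y i) * (z i - knapsackClamp l u y a t i) :=
    fun z hz => (hslack _ hz.2).trans (mul_sum_sub_le_sum_knapsackClamp hz.1)
  refine ⟨knapsackClamp l u y a t, ⟨knapsackClamp_mem_box hlu t, hsum⟩, fun z hz => ?_,
    fun x' hx' => ?_, (mid_knapsackClamp (fun i => (ha i).le) tL tU).symm⟩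
  · have hpyth := sum_sq_add_sum_sq_le_of_inner_nonneg (hvi z hz)
    have hsq : 0 ≤ ∑ i, (z i - knapsackClamp l u y a t i) ^ 2 := by positivity
    linarith
  · exact eq_of_inner_nonneg_of_sum_sq_le (hvi x' hx'.1)
      (le_of_mul_le_mul_left (hx'.2 _ ⟨knapsackClamp_mem_box hlu t, hsum⟩) one_half_pos)

/-- Projection onto the inequality knapsack set
`D_I = {x : l ≤ x ≤ u, b_l ≤ aᵀx ≤ b_u}` (with `aᵢ > 0` for all `i`):
if `x_L*` and `x_U*` are the unique minimizers of `½‖x − y‖₂²` over the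
equality knapsack sets with right-hand sides `b_l` and `b_u` respectively,
then `min_{x ∈ D_I} ½‖x − y‖₂²` has a unique solution `x*` and
`x* = mid(x_L*, y, x_U*)` componentwise. -/
theorem knapsack_inequality_projection (n : ℕ) (a l u y xL xU : Fin n → ℝ)
    (bl bu : ℝ)
    (hlu : ∀ i, l i ≤ u i) (ha : ∀ i, 0 < a i) (hb : bl ≤ bu)
    (hne : ∃ x : Fin n → ℝ, (∀ i, l i ≤ x i ∧ x i ≤ u i) ∧
      bl ≤ ∑ i, a i * x i ∧ ∑ i, a i * x i ≤ bu)
    (hxLfeas : (∀ i, l i ≤ xL i ∧ xL i ≤ u i) ∧ ∑ i, a i * xL i = bl)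
    (hxLmin : ∀ z : Fin n → ℝ,
      ((∀ i, l i ≤ z i ∧ z i ≤ u i) ∧ ∑ i, a i * z i = bl) →
      (1 / 2) * ∑ i, (xL i - y i) ^ 2 ≤ (1 / 2) * ∑ i, (z i - y i) ^ 2)
    (hxLuniq : ∀ x' : Fin n → ℝ,
      (((∀ i, l i ≤ x' i ∧ x' i ≤ u i) ∧ ∑ i, a i * x' i = bl) ∧
        ∀ z : Fin n → ℝ, ((∀ i, l i ≤ z i ∧ z i ≤ u i) ∧ ∑ i, a i * z i = bl) →
          (1 / 2) * ∑ i, (x' i - y i) ^ 2 ≤ (1 / 2) * ∑ i, (z i - y i) ^ 2) →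
      x' = xL)
    (hxUfeas : (∀ i, l i ≤ xU i ∧ xU i ≤ u i) ∧ ∑ i, a i * xU i = bu)
    (hxUmin : ∀ z : Fin n → ℝ,
      ((∀ i, l i ≤ z i ∧ z i ≤ u i) ∧ ∑ i, a i * z i = bu) →
      (1 / 2) * ∑ i, (xU i - y i) ^ 2 ≤ (1 / 2) * ∑ i, (z i - y i) ^ 2)
    (hxUuniq : ∀ x' : Fin n → ℝ,
      (((∀ i, l i ≤ x' i ∧ x' i ≤ u i) ∧ ∑ i, a i * x' i = bu) ∧
        ∀ z : Fin n → ℝ, ((∀ i, l i ≤ z i ∧ z i ≤ u i) ∧ ∑ i, a i * z i = bu) →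
          (1 / 2) * ∑ i, (x' i - y i) ^ 2 ≤ (1 / 2) * ∑ i, (z i - y i) ^ 2) →
      x' = xU) :
    ∃ xstar : Fin n → ℝ,
      ((∀ i, l i ≤ xstar i ∧ xstar i ≤ u i) ∧
        bl ≤ ∑ i, a i * xstar i ∧ ∑ i, a i * xstar i ≤ bu) ∧
      (∀ z : Fin n → ℝ,
        ((∀ i, l i ≤ z i ∧ z i ≤ u i) ∧ bl ≤ ∑ i, a i * z i ∧ ∑ i, a i * z i ≤ bu) →
        (1 / 2) * ∑ i, (xstar i - y i) ^ 2 ≤ (1 / 2) * ∑ i, (z i - y i) ^ 2) ∧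
      (∀ x' : Fin n → ℝ,
        (((∀ i, l i ≤ x' i ∧ x' i ≤ u i) ∧
            bl ≤ ∑ i, a i * x' i ∧ ∑ i, a i * x' i ≤ bu) ∧
          ∀ z : Fin n → ℝ,
            ((∀ i, l i ≤ z i ∧ z i ≤ u i) ∧
              bl ≤ ∑ i, a i * z i ∧ ∑ i, a i * z i ≤ bu) →
            (1 / 2) * ∑ i, (x' i - y i) ^ 2 ≤ (1 / 2) * ∑ i, (z i - y i) ^ 2) →
        x' = xstar) ∧
      xstar = fun i => max (xL i) (min (y i) (xU i)) :=
  knapsack_inequality_projection_general n a l u y xL xU bl bu hlu ha hb hxLfeas hxLmin hxUfeas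
    hxUmin
end

section
/- Let a, l, u, y ∈ ℝⁿ with l ≤ u componentwise and aᵢ > 0 for every i, let b_l ≤ b_u in ℝ, and suppose D_I = {x ∈ ℝⁿ : l ≤ x ≤ u, b_l ≤ aᵀx ≤ b_u} is nonempty. Let x_L* be the unique minimizer of ½‖x − y‖₂² over {x : l ≤ x ≤ u, aᵀx = b_l}, x_U* the unique minimizer over {x : l ≤ x ≤ u, aᵀx = b_u}, and x* the unique minimizer over D_I. Then x_L* ≤ x* ≤ x_U* componentwise. -/
/-!
Let `x` minimize `‖z - y‖²` over the box at level `aᵀz = aᵀx`, and `x'` at a level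
`aᵀx' ≥ aᵀx`, and suppose `x' i < x i` for some `i`. With `w = x ⊓ x'`, `v = x ⊔ x'` and
`θ = aᵀ(x - w) / aᵀ(v - w)`, the points `p = w + θ(v - w)` and `q = v + θ(w - v)` stay in the
box, at the levels of `x` and `x'` respectively, and `0 < θ < 1` because `a > 0`. Since
`{w, v}` and `{x, x'}` have the same coordinates, `‖p - y‖² + ‖q - y‖²` falls short of
`‖x - y‖² + ‖x' - y‖²` by `2θ(1 - θ)‖v - w‖² > 0`, contradicting minimality. Both halves of
the theorem are instances of this, as `x*` also minimizes at its own level `aᵀx*`.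
-/

open Finset Set

variable {ι : Type*} [Fintype ι]

lemma sum_sq_sub_inf_add_sum_sq_sub_sup (x x' y : ι → ℝ) :
    ∑ i, ((x ⊓ x') i - y i) ^ 2 + ∑ i, ((x ⊔ x') i - y i) ^ 2 =
      ∑ i, (x i - y i) ^ 2 + ∑ i, (x' i - y i) ^ 2 := by
  simp only [← sum_add_distrib]
  refine sum_congr rfl fun i _ => ?_
  rcases le_total (x i) (x' i) with h | h
  · simp [h]
  · simp [h, add_comm]

lemma sum_sq_sub_add_smul_add_sum_sq_sub_add_smul (w v y : ι → ℝ) (θ : ℝ) :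
    ∑ i, ((w + θ • (v - w)) i - y i) ^ 2 + ∑ i, ((v + θ • (w - v)) i - y i) ^ 2 =
      ∑ i, (w i - y i) ^ 2 + ∑ i, (v i - y i) ^ 2 - 2 * θ * (1 - θ) * ∑ i, (v i - w i) ^ 2 := by
  simp only [Pi.add_apply, Pi.smul_apply, Pi.sub_apply, smul_eq_mul, mul_sum, ← sum_add_distrib,
    ← sum_sub_distrib]
  exact sum_congr rfl fun i _ => by ring

lemma dotProduct_pos_of_pos_of_nonneg {a d : ι → ℝ} (ha : ∀ i, 0 < a i) (hd : 0 ≤ d) {i : ι}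
    (hi : 0 < d i) : 0 < a ⬝ᵥ d :=
  sum_pos' (fun j _ => mul_nonneg (ha j).le (hd j)) ⟨i, mem_univ i, mul_pos (ha i) hi⟩

theorem exists_mem_Icc_sum_sq_add_lt_of_lt {a l u y x x' : ι → ℝ} (ha : ∀ i, 0 < a i)
    (hx : x ∈ Icc l u) (hx' : x' ∈ Icc l u) (hle : a ⬝ᵥ x ≤ a ⬝ᵥ x') {i : ι} (hi : x' i < x i) :
    ∃ p ∈ Icc l u, ∃ q ∈ Icc l u, a ⬝ᵥ p = a ⬝ᵥ x ∧ a ⬝ᵥ q = a ⬝ᵥ x' ∧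
      ∑ j, (p j - y j) ^ 2 + ∑ j, (q j - y j) ^ 2 <
        ∑ j, (x j - y j) ^ 2 + ∑ j, (x' j - y j) ^ 2 := by
  set w := x ⊓ x'
  set v := x ⊔ x'
  have hw : w ∈ Icc l u := ⟨le_inf hx.1 hx'.1, inf_le_left.trans hx.2⟩
  have hv : v ∈ Icc l u := ⟨hx.1.trans le_sup_left, sup_le hx.2 hx'.2⟩
  have hwv : v - w = (x - w) + (x' - w) := by
    ext j; simp only [Pi.sub_apply, Pi.add_apply, w, v, Pi.inf_apply, Pi.sup_apply]
    linarith [min_add_max (x j) (x' j)]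
  have hvx' : v - x' = x - w := by
    ext j; simp only [Pi.sub_apply, w, v, Pi.inf_apply, Pi.sup_apply]
    linarith [min_add_max (x j) (x' j)]
  set d := a ⬝ᵥ (x - w)
  have hd : 0 < d := dotProduct_pos_of_pos_of_nonneg ha (sub_nonneg.mpr inf_le_left)
    (i := i) (by simp [w, hi])
  have hd' : d ≤ a ⬝ᵥ (x' - w) := by simp only [d, dotProduct_sub]; linarith
  set θ := d / (a ⬝ᵥ (v - w))
  have hS : a ⬝ᵥ (v - w) = d + a ⬝ᵥ (x' - w) := by rw [hwv, dotProduct_add]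
  have hθS : θ * a ⬝ᵥ (v - w) = d := div_mul_cancel₀ _ (by linarith)
  have hθ0 : 0 < θ := div_pos hd (by linarith)
  have hθ1 : θ < 1 := (div_lt_one (by linarith)).mpr (by linarith)
  have hT : 0 < ∑ j, (v j - w j) ^ 2 := sum_pos' (fun j _ => sq_nonneg _)
    ⟨i, mem_univ i, by simp [w, v, hi.le, sub_pos.mpr hi]⟩
  refine ⟨w + θ • (v - w), (convex_Icc l u).add_smul_sub_mem hw hv ⟨hθ0.le, hθ1.le⟩,
    v + θ • (w - v), (convex_Icc l u).add_smul_sub_mem hv hw ⟨hθ0.le, hθ1.le⟩, ?_, ?_, ?_⟩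
  · rw [dotProduct_add, dotProduct_smul, smul_eq_mul, hθS]
    simp only [d, dotProduct_sub]; ring
  · have hvd : a ⬝ᵥ v - d = a ⬝ᵥ x' := by
      rw [sub_eq_iff_eq_add', ← dotProduct_add, ← hvx', sub_add_cancel]
    rw [dotProduct_add, dotProduct_smul, smul_eq_mul, ← neg_sub, dotProduct_neg, mul_neg, hθS,
      ← hvd]
    ring
  · rw [sum_sq_sub_add_smul_add_sum_sq_sub_add_smul, sum_sq_sub_inf_add_sum_sq_sub_sup]
    have : 0 < 2 * θ * (1 - θ) * ∑ j, (v j - w j) ^ 2 := by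
      have : 0 < 1 - θ := by linarith
      positivity
    linarith

theorem le_of_isMinOn_sum_sq_of_dotProduct_le {a l u y x x' : ι → ℝ} (ha : ∀ i, 0 < a i)
    (hx : x ∈ Icc l u) (hx' : x' ∈ Icc l u)
    (hx_min : IsMinOn (fun z => ∑ i, (z i - y i) ^ 2) (Icc l u ∩ {z | a ⬝ᵥ z = a ⬝ᵥ x}) x)
    (hx'_min : IsMinOn (fun z => ∑ i, (z i - y i) ^ 2) (Icc l u ∩ {z | a ⬝ᵥ z = a ⬝ᵥ x'}) x')
    (hle : a ⬝ᵥ x ≤ a ⬝ᵥ x') : x ≤ x' := by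
  intro i
  by_contra! hi
  obtain ⟨p, hp, q, hq, hpx, hqx', hlt⟩ :=
    exists_mem_Icc_sum_sq_add_lt_of_lt (y := y) ha hx hx' hle hi
  have hp_ge : ∑ j, (x j - y j) ^ 2 ≤ ∑ j, (p j - y j) ^ 2 := hx_min ⟨hp, hpx⟩
  have hq_ge : ∑ j, (x' j - y j) ^ 2 ≤ ∑ j, (q j - y j) ^ 2 := hx'_min ⟨hq, hqx'⟩
  linarith

theorem knapsack_inequality_projection_between_general (n : ℕ)
    (a l u y xL xU xstar : Fin n → ℝ) (bl bu : ℝ)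
    (ha : ∀ i, 0 < a i)
    (hxLfeas : (∀ i, l i ≤ xL i ∧ xL i ≤ u i) ∧ ∑ i, a i * xL i = bl)
    (hxLmin : ∀ z : Fin n → ℝ,
      ((∀ i, l i ≤ z i ∧ z i ≤ u i) ∧ ∑ i, a i * z i = bl) →
      (1 / 2) * ∑ i, (xL i - y i) ^ 2 ≤ (1 / 2) * ∑ i, (z i - y i) ^ 2)
    (hxUfeas : (∀ i, l i ≤ xU i ∧ xU i ≤ u i) ∧ ∑ i, a i * xU i = bu)
    (hxUmin : ∀ z : Fin n → ℝ,
      ((∀ i, l i ≤ z i ∧ z i ≤ u i) ∧ ∑ i, a i * z i = bu) →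
      (1 / 2) * ∑ i, (xU i - y i) ^ 2 ≤ (1 / 2) * ∑ i, (z i - y i) ^ 2)
    (hxSfeas : (∀ i, l i ≤ xstar i ∧ xstar i ≤ u i) ∧
      bl ≤ ∑ i, a i * xstar i ∧ ∑ i, a i * xstar i ≤ bu)
    (hxSmin : ∀ z : Fin n → ℝ,
      ((∀ i, l i ≤ z i ∧ z i ≤ u i) ∧ bl ≤ ∑ i, a i * z i ∧ ∑ i, a i * z i ≤ bu) →
      (1 / 2) * ∑ i, (xstar i - y i) ^ 2 ≤ (1 / 2) * ∑ i, (z i - y i) ^ 2) :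
    ∀ i, xL i ≤ xstar i ∧ xstar i ≤ xU i := by
  have mem_box : ∀ {x : Fin n → ℝ}, (∀ i, l i ≤ x i ∧ x i ≤ u i) → x ∈ Icc l u :=
    fun h => ⟨fun i => (h i).1, fun i => (h i).2⟩
  have hL : IsMinOn (fun z => ∑ i, (z i - y i) ^ 2) (Icc l u ∩ {z | a ⬝ᵥ z = a ⬝ᵥ xL}) xL :=
    isMinOn_iff.mpr fun z ⟨hz, hlevel⟩ => by
      have := hxLmin z ⟨fun i => ⟨hz.1 i, hz.2 i⟩, hlevel.trans hxLfeas.2⟩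
      linarith
  have hU : IsMinOn (fun z => ∑ i, (z i - y i) ^ 2) (Icc l u ∩ {z | a ⬝ᵥ z = a ⬝ᵥ xU}) xU :=
    isMinOn_iff.mpr fun z ⟨hz, hlevel⟩ => by
      have := hxUmin z ⟨fun i => ⟨hz.1 i, hz.2 i⟩, hlevel.trans hxUfeas.2⟩
      linarith
  have hstar :
      IsMinOn (fun z => ∑ i, (z i - y i) ^ 2) (Icc l u ∩ {z | a ⬝ᵥ z = a ⬝ᵥ xstar}) xstar :=
    isMinOn_iff.mpr fun z ⟨hz, hlevel⟩ => by
      have hlevel' : ∑ i, a i * z i = ∑ i, a i * xstar i := hlevel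
      have := hxSmin z ⟨fun i => ⟨hz.1 i, hz.2 i⟩, hlevel' ▸ hxSfeas.2⟩
      linarith
  intro i
  exact ⟨le_of_isMinOn_sum_sq_of_dotProduct_le ha (mem_box hxLfeas.1) (mem_box hxSfeas.1)
      hL hstar (hxLfeas.2.le.trans hxSfeas.2.1) i,
    le_of_isMinOn_sum_sq_of_dotProduct_le ha (mem_box hxSfeas.1) (mem_box hxUfeas.1)
      hstar hU (hxSfeas.2.2.trans hxUfeas.2.ge) i⟩

/-- With `aᵢ > 0` for all `i`: if `x_L*`, `x_U*` are the unique minimizers of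
`½‖x − y‖₂²` over the equality knapsack sets with right-hand sides `b_l`, `b_u`,
and `x*` is the unique minimizer over
`D_I = {x : l ≤ x ≤ u, b_l ≤ aᵀx ≤ b_u}`, then `x_L* ≤ x* ≤ x_U*`
componentwise. -/
theorem knapsack_inequality_projection_between (n : ℕ)
    (a l u y xL xU xstar : Fin n → ℝ) (bl bu : ℝ)
    (hlu : ∀ i, l i ≤ u i) (ha : ∀ i, 0 < a i) (hb : bl ≤ bu)
    (hne : ∃ x : Fin n → ℝ, (∀ i, l i ≤ x i ∧ x i ≤ u i) ∧
      bl ≤ ∑ i, a i * x i ∧ ∑ i, a i * x i ≤ bu)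
    (hxLfeas : (∀ i, l i ≤ xL i ∧ xL i ≤ u i) ∧ ∑ i, a i * xL i = bl)
    (hxLmin : ∀ z : Fin n → ℝ,
      ((∀ i, l i ≤ z i ∧ z i ≤ u i) ∧ ∑ i, a i * z i = bl) →
      (1 / 2) * ∑ i, (xL i - y i) ^ 2 ≤ (1 / 2) * ∑ i, (z i - y i) ^ 2)
    (hxLuniq : ∀ x' : Fin n → ℝ,
      (((∀ i, l i ≤ x' i ∧ x' i ≤ u i) ∧ ∑ i, a i * x' i = bl) ∧
        ∀ z : Fin n → ℝ, ((∀ i, l i ≤ z i ∧ z i ≤ u i) ∧ ∑ i, a i * z i = bl) →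
          (1 / 2) * ∑ i, (x' i - y i) ^ 2 ≤ (1 / 2) * ∑ i, (z i - y i) ^ 2) →
      x' = xL)
    (hxUfeas : (∀ i, l i ≤ xU i ∧ xU i ≤ u i) ∧ ∑ i, a i * xU i = bu)
    (hxUmin : ∀ z : Fin n → ℝ,
      ((∀ i, l i ≤ z i ∧ z i ≤ u i) ∧ ∑ i, a i * z i = bu) →
      (1 / 2) * ∑ i, (xU i - y i) ^ 2 ≤ (1 / 2) * ∑ i, (z i - y i) ^ 2)
    (hxUuniq : ∀ x' : Fin n → ℝ,
      (((∀ i, l i ≤ x' i ∧ x' i ≤ u i) ∧ ∑ i, a i * x' i = bu) ∧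
        ∀ z : Fin n → ℝ, ((∀ i, l i ≤ z i ∧ z i ≤ u i) ∧ ∑ i, a i * z i = bu) →
          (1 / 2) * ∑ i, (x' i - y i) ^ 2 ≤ (1 / 2) * ∑ i, (z i - y i) ^ 2) →
      x' = xU)
    (hxSfeas : (∀ i, l i ≤ xstar i ∧ xstar i ≤ u i) ∧
      bl ≤ ∑ i, a i * xstar i ∧ ∑ i, a i * xstar i ≤ bu)
    (hxSmin : ∀ z : Fin n → ℝ,
      ((∀ i, l i ≤ z i ∧ z i ≤ u i) ∧ bl ≤ ∑ i, a i * z i ∧ ∑ i, a i * z i ≤ bu) →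
      (1 / 2) * ∑ i, (xstar i - y i) ^ 2 ≤ (1 / 2) * ∑ i, (z i - y i) ^ 2)
    (hxSuniq : ∀ x' : Fin n → ℝ,
      (((∀ i, l i ≤ x' i ∧ x' i ≤ u i) ∧
          bl ≤ ∑ i, a i * x' i ∧ ∑ i, a i * x' i ≤ bu) ∧
        ∀ z : Fin n → ℝ,
          ((∀ i, l i ≤ z i ∧ z i ≤ u i) ∧
            bl ≤ ∑ i, a i * z i ∧ ∑ i, a i * z i ≤ bu) →
          (1 / 2) * ∑ i, (x' i - y i) ^ 2 ≤ (1 / 2) * ∑ i, (z i - y i) ^ 2) →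
      x' = xstar) :
    ∀ i, xL i ≤ xstar i ∧ xstar i ≤ xU i :=
  knapsack_inequality_projection_between_general n a l u y xL xU xstar bl bu ha hxLfeas hxLmin
    hxUfeas hxUmin hxSfeas hxSmin
end

section
/- Let a ∈ ℝⁿ be nonzero, b_l ≤ b_u in ℝ, and y ∈ ℝⁿ. Define zl, zu ∈ ℝⁿ by zlᵢ = yᵢ − aᵢ·(Σⱼ aⱼ·yⱼ − b_l)/(Σⱼ aⱼ²) and zuᵢ = yᵢ − aᵢ·(Σⱼ aⱼ·yⱼ − b_u)/(Σⱼ aⱼ²). Then the vector z whose i-th component is the median of the three numbers {zlᵢ, yᵢ, zuᵢ} is the unique minimizer of ½‖x − y‖₂² over the slab {x ∈ ℝⁿ : b_l ≤ aᵀx ≤ b_u}. -/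
/-!
Write `S = ∑ aⱼ²`, `s = ∑ aⱼ yⱼ`, `t_l = (s - b_l)/S` and `t_u = (s - b_u)/S ≤ t_l`. The map
`τ ↦ y - τ a` moves along a line, so it commutes with medians: `z = y - t a`, where
`t = median(t_l, 0, t_u)` is the projection of `0` onto `[t_u, t_l]`. Hence `aᵀz = s - tS` lies
in `[b_l, b_u]`, and the one-dimensional variational inequality for `t` becomes
`⟪x - z, z - y⟫ ≥ 0` for every `x` in the slab, which characterizes `z` as the unique nearest
point: `‖x - y‖² ≥ ‖x - z‖² + ‖z - y‖²`.
-/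

open Finset

section Median

variable {α β : Type*} [LinearOrder α] [LinearOrder β]

def median3 (p q r : α) : α := max (min p q) (min (max p q) r)

theorem median3_eq_min_max (p q r : α) : median3 p q r = min (max p q) (max (min p q) r) := by
  simp only [median3, max_def, min_def]
  split_ifs <;> order

theorem median3_eq_max_min_of_le {p q r : α} (h : r ≤ p) : median3 p q r = max r (min p q) := by
  simp only [median3, max_def, min_def]
  split_ifs <;> order

theorem Monotone.median3_map {f : α → β} (hf : Monotone f) (p q r : α) :
    median3 (f p) (f q) (f r) = f (median3 p q r) := by
  simp only [median3, hf.map_max, hf.map_min]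

theorem Antitone.median3_map {f : α → β} (hf : Antitone f) (p q r : α) :
    median3 (f p) (f q) (f r) = f (median3 p q r) := by
  rw [median3_eq_min_max]
  simp only [median3, hf.map_max, hf.map_min]

end Median

theorem median3_sub_mul {p c t₁ t₂ : ℝ} (h : t₂ ≤ t₁) :
    median3 (p - c * t₁) p (p - c * t₂) = p - c * max t₂ (min t₁ 0) := by
  have hline : median3 (p - c * t₁) (p - c * 0) (p - c * t₂) = p - c * median3 t₁ 0 t₂ := by
    rcases le_total 0 c with hc | hc
    · exact Antitone.median3_map (f := fun τ => p - c * τ) (fun _ _ _ => by nlinarith) t₁ 0 t₂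
    · exact Monotone.median3_map (f := fun τ => p - c * τ) (fun _ _ _ => by nlinarith) t₁ 0 t₂
  rwa [mul_zero, sub_zero, median3_eq_max_min_of_le h] at hline

theorem clamp_mul_sub_clamp_nonneg {lo hi r : ℝ} (hlo : lo ≤ r) (hhi : r ≤ hi) :
    0 ≤ max lo (min hi 0) * (r - max lo (min hi 0)) := by
  rcases le_total hi 0 with h | h
  · rw [min_eq_left h, max_eq_right (hlo.trans hhi)]
    nlinarith
  rcases le_total lo 0 with h' | h'
  · simp [min_eq_right h, max_eq_right h']
  · rw [min_eq_right h, max_eq_left h']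
    nlinarith

section EuclideanSum

variable {ι : Type*} [Fintype ι]

theorem sum_sq_pos_of_ne_zero {a : ι → ℝ} (ha : a ≠ 0) : 0 < ∑ i, a i ^ 2 := by
  obtain ⟨i, hi⟩ := Function.ne_iff.mp ha
  exact sum_pos' (fun j _ => sq_nonneg (a j)) ⟨i, mem_univ i, sq_pos_of_ne_zero hi⟩

theorem sum_sq_sub_add_sum_sq_sub_le {x y z : ι → ℝ}
    (h : 0 ≤ ∑ i, (x i - z i) * (z i - y i)) :
    ∑ i, (x i - z i) ^ 2 + ∑ i, (z i - y i) ^ 2 ≤ ∑ i, (x i - y i) ^ 2 := by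
  have hexpand : ∑ i, (x i - y i) ^ 2 =
      ∑ i, (x i - z i) ^ 2 + 2 * ∑ i, (x i - z i) * (z i - y i) + ∑ i, (z i - y i) ^ 2 := by
    simp only [mul_sum, ← sum_add_distrib]
    exact sum_congr rfl fun i _ => by ring
  linarith

theorem sum_sq_sub_le_of_inner_nonneg {x y z : ι → ℝ}
    (h : 0 ≤ ∑ i, (x i - z i) * (z i - y i)) :
    ∑ i, (z i - y i) ^ 2 ≤ ∑ i, (x i - y i) ^ 2 := by
  have hxz : 0 ≤ ∑ i, (x i - z i) ^ 2 := sum_nonneg fun i _ => sq_nonneg _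
  linarith [sum_sq_sub_add_sum_sq_sub_le h]

theorem eq_of_inner_nonneg_of_sum_sq_sub_le {x y z : ι → ℝ}
    (h : 0 ≤ ∑ i, (x i - z i) * (z i - y i))
    (hle : ∑ i, (x i - y i) ^ 2 ≤ ∑ i, (z i - y i) ^ 2) : x = z := by
  have hzero : ∑ i, (x i - z i) ^ 2 = 0 :=
    le_antisymm (by linarith [sum_sq_sub_add_sum_sq_sub_le h])
      (sum_nonneg fun i _ => sq_nonneg _)
  funext i
  have := (sum_eq_zero_iff_of_nonneg fun j _ => sq_nonneg (x j - z j)).mp hzero i (mem_univ i)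
  exact sub_eq_zero.mp (pow_eq_zero_iff two_ne_zero |>.mp this)

variable {a y z : ι → ℝ} {t : ℝ}

theorem sum_mul_of_eq_sub_mul (hz : ∀ i, z i = y i - a i * t) :
    ∑ i, a i * z i = ∑ i, a i * y i - t * ∑ i, a i ^ 2 := by
  simp only [hz, mul_sub, sum_sub_distrib, mul_sum]
  exact congrArg _ (sum_congr rfl fun i _ => by ring)

theorem sum_sub_mul_sub_of_eq_sub_mul (hz : ∀ i, z i = y i - a i * t) (x : ι → ℝ) :
    ∑ i, (x i - z i) * (z i - y i) = t * (∑ i, a i * z i - ∑ i, a i * x i) := by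
  simp only [mul_sub, ← sum_sub_distrib, mul_sum]
  exact sum_congr rfl fun i _ => by rw [hz]; ring

theorem slab_mem_and_inner_nonneg_of_eq_sub_mul {bl bu : ℝ} (hS : 0 < ∑ i, a i ^ 2)
    (hb : bl ≤ bu) (hz : ∀ i, z i = y i - a i * max ((∑ j, a j * y j - bu) / ∑ j, a j ^ 2)
      (min ((∑ j, a j * y j - bl) / ∑ j, a j ^ 2) 0)) :
    (bl ≤ ∑ i, a i * z i ∧ ∑ i, a i * z i ≤ bu) ∧
      ∀ x : ι → ℝ, bl ≤ ∑ i, a i * x i → ∑ i, a i * x i ≤ bu →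
        0 ≤ ∑ i, (x i - z i) * (z i - y i) := by
  set s := ∑ j, a j * y j
  set S := ∑ j, a j ^ 2
  have hslab : ∀ u, bl ≤ u → u ≤ bu → (s - bu) / S ≤ (s - u) / S ∧ (s - u) / S ≤ (s - bl) / S :=
    fun u h₁ h₂ => ⟨by gcongr, by gcongr⟩
  set t := max ((s - bu) / S) (min ((s - bl) / S) 0)
  have haz : ∑ i, a i * z i = s - t * S := sum_mul_of_eq_sub_mul hz
  refine ⟨?_, fun x h₁ h₂ => ?_⟩
  · have hlo := (div_le_iff₀ hS).mp (le_max_left _ _ : (s - bu) / S ≤ t)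
    have hhi := (le_div_iff₀ hS).mp (max_le (hslab bu hb le_rfl).2 (min_le_left _ _) : t ≤ _)
    constructor <;> linarith
  · obtain ⟨hr₁, hr₂⟩ := hslab _ h₁ h₂
    have hax : ∑ i, a i * x i = s - (s - ∑ i, a i * x i) / S * S := by field_simp; ring
    rw [sum_sub_mul_sub_of_eq_sub_mul hz, haz, hax]
    nlinarith [clamp_mul_sub_clamp_nonneg hr₁ hr₂]

end EuclideanSum

/-- Projection onto a slab: for nonzero `a`, `b_l ≤ b_u`, and `y ∈ ℝⁿ`, let
`zlᵢ = yᵢ − aᵢ·(Σⱼ aⱼyⱼ − b_l)/(Σⱼ aⱼ²)` and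
`zuᵢ = yᵢ − aᵢ·(Σⱼ aⱼyⱼ − b_u)/(Σⱼ aⱼ²)`. Then the vector `z` whose `i`-th
component is the median of `{zlᵢ, yᵢ, zuᵢ}` is the unique minimizer of
`½‖x − y‖₂²` over `{x : b_l ≤ aᵀx ≤ b_u}`.  (The median of three reals
`p, q, r` is `max (min p q) (min (max p q) r)`.) -/
theorem slab_projection (n : ℕ) (a y : Fin n → ℝ) (ha : a ≠ 0) (bl bu : ℝ)
    (hb : bl ≤ bu) (zl zu z : Fin n → ℝ)
    (hzl : ∀ i, zl i = y i - a i * ((∑ j, a j * y j - bl) / ∑ j, a j ^ 2))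
    (hzu : ∀ i, zu i = y i - a i * ((∑ j, a j * y j - bu) / ∑ j, a j ^ 2))
    (hz : ∀ i, z i = max (min (zl i) (y i)) (min (max (zl i) (y i)) (zu i))) :
    (bl ≤ ∑ i, a i * z i ∧ ∑ i, a i * z i ≤ bu) ∧
    (∀ x : Fin n → ℝ, bl ≤ ∑ i, a i * x i → ∑ i, a i * x i ≤ bu →
      (1 / 2) * ∑ i, (z i - y i) ^ 2 ≤ (1 / 2) * ∑ i, (x i - y i) ^ 2) ∧
    (∀ x : Fin n → ℝ,
      ((bl ≤ ∑ i, a i * x i ∧ ∑ i, a i * x i ≤ bu) ∧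
        ∀ w : Fin n → ℝ, bl ≤ ∑ i, a i * w i → ∑ i, a i * w i ≤ bu →
          (1 / 2) * ∑ i, (x i - y i) ^ 2 ≤ (1 / 2) * ∑ i, (w i - y i) ^ 2) →
      x = z) := by
  have hS : 0 < ∑ j, a j ^ 2 := sum_sq_pos_of_ne_zero ha
  have hzt : ∀ i, z i = y i - a i * max ((∑ j, a j * y j - bu) / ∑ j, a j ^ 2)
      (min ((∑ j, a j * y j - bl) / ∑ j, a j ^ 2) 0) := fun i => by
    rw [hz, hzl, hzu]
    exact median3_sub_mul (by gcongr)
  obtain ⟨hzmem, hvar⟩ := slab_mem_and_inner_nonneg_of_eq_sub_mul hS hb hzt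
  refine ⟨hzmem, fun x h₁ h₂ => ?_, fun x ⟨⟨h₁, h₂⟩, hmin⟩ => ?_⟩
  · linarith [sum_sq_sub_le_of_inner_nonneg (hvar x h₁ h₂)]
  · exact eq_of_inner_nonneg_of_sum_sq_sub_le (hvar x h₁ h₂) (by linarith [hmin z hzmem.1 hzmem.2])
end
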